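/- arXiv:1102.5764 — 2 statements merged into one kernel-verified Lean document; each statement's English description precedes it below -/
import Mathlib

section
/- Let σ be a p-uniform morphism on A_m and let a ∈ F_p. Then for every n ≥ 0, M_{σ^n}(a) = (M_σ(a))^n, where matrix entries are evaluated at T = a. -/
open Polynomial
open scoped Classical

/-- The extension of a substitution `σ` on the alphabet `{0,…,m-1}` to finite words. -/
def applyMorph {m : ℕ} (σ : Fin m → List (Fin m)) (w : List (Fin m)) : List (Fin m) :=
  w.flatMap σ

/-- The `n`-th iterate `σⁿ` of a substitution, as a map on letters. -/
def iterMorph {m : ℕ} (σ : Fin m → List (Fin m)) : ℕ → Fin m → List (Fin m)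
  | 0 => fun i => [i]
  | n + 1 => fun i => applyMorph σ (iterMorph σ n i)

/-- `β_{W,j}(T) = Σ_l T^l`, summed over the positions `l` of the letter `j` in the
reversal of the word `W` (entries in `F_p[T]`). -/
noncomputable def beta (p m : ℕ) (W : List (Fin m)) (j : Fin m) : Polynomial (ZMod p) :=
  ∑ l ∈ Finset.range W.length,
    if W.reverse.getD l j = j then Polynomial.X ^ l else 0

/-- The matrix `M_σ(T) = (β_{σ(i),j}(T))_{i,j}` associated with a substitution `σ`. -/
noncomputable def Mmat (p m : ℕ) (σ : Fin m → List (Fin m)) :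
    Matrix (Fin m) (Fin m) (Polynomial (ZMod p)) :=
  fun i j => beta p m (σ i) j

lemma beta_append (p m : ℕ) (U V : List (Fin m)) (j : Fin m) :
    beta p m (U ++ V) j = beta p m V j + X ^ V.length * beta p m U j := by
  unfold beta
  rw [Finset.mul_sum]
  have hlen : (U ++ V).length = V.length + U.length := by
    simp [List.length_append]; omega
  rw [hlen, Finset.sum_range_add]
  congr 1
  · apply Finset.sum_congr rfl
    intro l hl
    rw [Finset.mem_range] at hl
    rw [List.reverse_append, List.getD_append _ _ _ _ (by simpa using hl)]
  · apply Finset.sum_congr rfl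
    intro l hl
    rw [Finset.mem_range] at hl
    rw [List.reverse_append, List.getD_append_right _ _ _ _ (by simp)]
    simp only [List.length_reverse, Nat.add_sub_cancel_left]
    split <;> [ring; ring]

lemma beta_singleton (p m : ℕ) (i j : Fin m) :
    beta p m [i] j = if i = j then 1 else 0 := by
  unfold beta
  simp

lemma length_applyMorph {p m : ℕ} (σ : Fin m → List (Fin m))
    (hσ : ∀ i, (σ i).length = p) (W : List (Fin m)) :
    (applyMorph σ W).length = p * W.length := by
  induction W with
  | nil => simp [applyMorph]
  | cons w W ih =>
      simp only [applyMorph, List.flatMap_cons, List.length_append] at *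
      rw [ih, hσ, List.length_cons]; ring

lemma key (p m : ℕ) [Fact p.Prime] (σ : Fin m → List (Fin m))
    (hσ : ∀ i, (σ i).length = p) (a : ZMod p) (W : List (Fin m)) (j : Fin m) :
    eval a (beta p m (applyMorph σ W) j)
      = ∑ i, eval a (beta p m W i) * eval a (beta p m (σ i) j) := by
  induction W with
  | nil =>
      simp [applyMorph, beta]
  | cons w W ih =>
      have h1 : applyMorph σ (w :: W) = σ w ++ applyMorph σ W := by
        simp [applyMorph]
      rw [h1, beta_append]
      have hpow : (a ^ (applyMorph σ W).length) = a ^ W.length := by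
        rw [length_applyMorph σ hσ, pow_mul', ZMod.pow_card]
      simp only [eval_add, eval_mul, eval_pow, eval_X, ih, hpow]
      have h3 : ∀ i : Fin m,
          eval a (beta p m (w :: W) i)
            = eval a (beta p m W i) + a ^ W.length * (if w = i then 1 else 0) := by
        intro i
        show eval a (beta p m ([w] ++ W) i) = _
        rw [beta_append, beta_singleton]
        split <;> simp
      simp only [h3, add_mul, Finset.sum_add_distrib]
      congr 1
      have h4 : ∀ i : Fin m,
          (a ^ W.length * (if w = i then 1 else 0)) * eval a (beta p m (σ i) j)
            = if w = i then a ^ W.length * eval a (beta p m (σ i) j) else 0 := by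
        intro i; split <;> simp
      simp only [h4, Finset.sum_ite_eq, Finset.mem_univ, if_true]

/-- For `a ∈ F_p`, `M_{σⁿ}(a) = (M_σ(a))ⁿ` for every `n ≥ 0`. -/
theorem Mmat_iter_eval (p m : ℕ) [Fact p.Prime]
    (σ : Fin m → List (Fin m)) (hσ : ∀ i, (σ i).length = p)
    (a : ZMod p) (n : ℕ) :
    (Mmat p m (iterMorph σ n)).map (Polynomial.eval a) =
      ((Mmat p m σ).map (Polynomial.eval a)) ^ n := by
  induction n with
  | zero =>
      ext i j
      simp [Mmat, iterMorph, beta_singleton, Matrix.one_apply, apply_ite (eval a)]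
  | succ n ih =>
      rw [pow_succ, ← ih]
      ext i j
      simp only [Matrix.map_apply, Matrix.mul_apply, Mmat, iterMorph]
      exact key p m σ hσ a (iterMorph σ n i) j
end

section
/- With the hypotheses of the approximation lemma (sequence P_n/Q_n with |Q_n| < |Q_{n+1}| ≤ c₀|Q_n|^θ and c₁/|Q_n|^{1+ρ} ≤ |f − P_n/Q_n| ≤ c₂/|Q_n|^{1+δ}, 0 < δ ≤ ρ, θ ≥ 1), assume additionally that there exists N such that gcd(P_n, Q_n) = 1 for all n ≥ N. Then 1 + δ ≤ μ(f) ≤ max(1 + ρ, 1 + θ/δ). In particular, if ρ = δ and θ ≤ δ², then μ(f) = 1 + δ. -/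
open Polynomial LaurentSeries
open scoped Classical

/-- The absolute value `|f| = |T|^{-i₀}` on `F((T⁻¹))`, where `i₀` is the order of `f`
as a Hahn series in `T⁻¹` and `t = |T| > 1` is fixed; `|0| = 0`. -/
noncomputable def lAbs {F : Type*} [Field F] (t : ℝ) (f : LaurentSeries F) : ℝ :=
  if f = 0 then 0 else t ^ (-f.order)

/-- The image of a polynomial `P(T)` in the field of Laurent series in `T⁻¹`:
the polynomial variable `T` is sent to the inverse of the Hahn-series variable. -/
noncomputable def polyLS {F : Type*} [Field F] (P : Polynomial F) : LaurentSeries F :=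
  Polynomial.aeval (HahnSeries.single (-1 : ℤ) (1 : F)) P

/-- The irrationality exponent `μ(f)`: the supremum of the real numbers `τ` for which
`|f - P/Q| < |Q|^{-τ}` has infinitely many solutions `(P, Q) ∈ F_q[T]²`, `Q ≠ 0`. -/
noncomputable def irrExp {F : Type*} [Field F] (t : ℝ) (f : LaurentSeries F) : ℝ :=
  sSup {τ : ℝ | {PQ : Polynomial F × Polynomial F | PQ.2 ≠ 0 ∧
    lAbs t (f - polyLS PQ.1 / polyLS PQ.2) < (lAbs t (polyLS PQ.2)) ^ (-τ)}.Infinite}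

/-!
`lAbs t` is a non-archimedean absolute value with `|P| = t ^ deg P` on polynomials, so two
distinct fractions satisfy `|P/Q - P'/Q'| ≥ 1 / (|Q| |Q'|)`. The approximations `P n / Q n`
themselves give `μ(f) ≥ 1 + δ`. For the upper bound, let `P/Q` solve `|f - P/Q| < |Q|^{-τ}` and
take the first `k` with `|Q k|^δ > c₂ |Q|`, so that `|Q k| ≪ |Q|^{θ/δ}` by the growth condition.
If `P/Q = P k / Q k`, coprimality gives `|Q k| ≤ |Q|` and the lower bound `c₁ / |Q k|^{1+ρ}`
bounds `|Q|` when `τ > 1 + ρ`. Otherwise `|f - P k / Q k| < 1 / (|Q k| |Q|)`, hence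
`|f - P/Q| ≥ 1 / (|Q k| |Q|)` and `|Q|^{τ-1} < |Q k| ≪ |Q|^{θ/δ}`, which bounds `|Q|` when
`τ > 1 + θ/δ`. Since `F` is finite and a denominator admits at most one numerator when `τ ≥ 1`,
bounded denominators mean finitely many solutions.
-/

section

variable {F : Type*} [Field F] {t : ℝ}

section LaurentAbs

lemma lAbs_zero : lAbs t (0 : LaurentSeries F) = 0 := if_pos rfl

lemma lAbs_of_ne_zero {f : LaurentSeries F} (hf : f ≠ 0) : lAbs t f = t ^ (-f.order) := if_neg hf

lemma lAbs_nonneg (ht : 0 < t) (f : LaurentSeries F) : 0 ≤ lAbs t f := by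
  unfold lAbs
  split_ifs
  exacts [le_rfl, (zpow_pos ht _).le]

lemma lAbs_mul (ht : 0 < t) (f g : LaurentSeries F) :
    lAbs t (f * g) = lAbs t f * lAbs t g := by
  rcases eq_or_ne f 0 with rfl | hf
  · simp [lAbs_zero]
  rcases eq_or_ne g 0 with rfl | hg
  · simp [lAbs_zero]
  rw [lAbs_of_ne_zero hf, lAbs_of_ne_zero hg, lAbs_of_ne_zero (mul_ne_zero hf hg),
    HahnSeries.order_mul hf hg, neg_add, zpow_add₀ ht.ne']

lemma lAbs_div (ht : 0 < t) (f g : LaurentSeries F) :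
    lAbs t (f / g) = lAbs t f / lAbs t g := by
  rcases eq_or_ne g 0 with rfl | hg
  · simp [lAbs_zero]
  rw [eq_div_iff (by rw [lAbs_of_ne_zero hg]; exact (zpow_pos ht _).ne'), ← lAbs_mul ht,
    div_mul_cancel₀ f hg]

lemma lAbs_neg (f : LaurentSeries F) : lAbs t (-f) = lAbs t f := by
  rcases eq_or_ne f 0 with rfl | hf
  · simp
  rw [lAbs_of_ne_zero (neg_ne_zero.mpr hf), lAbs_of_ne_zero hf, HahnSeries.order_neg]

lemma lAbs_add_le_max (ht : 1 < t) (f g : LaurentSeries F) :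
    lAbs t (f + g) ≤ max (lAbs t f) (lAbs t g) := by
  rcases eq_or_ne (f + g) 0 with hfg | hfg
  · rw [hfg, lAbs_zero]
    exact le_max_of_le_left (lAbs_nonneg (by linarith) f)
  rcases eq_or_ne f 0 with rfl | hf
  · simp
  rcases eq_or_ne g 0 with rfl | hg
  · simp
  rw [lAbs_of_ne_zero hfg, lAbs_of_ne_zero hf, lAbs_of_ne_zero hg, le_max_iff]
  rcases min_le_iff.mp (HahnSeries.min_order_le_order_add hfg) with h | h
  exacts [.inl (zpow_le_zpow_right₀ ht.le (neg_le_neg h)),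
    .inr (zpow_le_zpow_right₀ ht.le (neg_le_neg h))]

lemma lAbs_add_eq_of_lt (ht : 1 < t) {f g : LaurentSeries F} (h : lAbs t f < lAbs t g) :
    lAbs t (f + g) = lAbs t g := by
  refine le_antisymm ((lAbs_add_le_max ht f g).trans (max_eq_right h.le).le) ?_
  have := lAbs_add_le_max ht (f + g) (-f)
  rw [add_neg_cancel_comm, lAbs_neg] at this
  exact (le_max_iff.mp this).resolve_right h.not_ge

end LaurentAbs

section PolyLS

lemma polyLS_eq_sum (P : F[X]) :
    polyLS P = P.sum fun n a => HahnSeries.single (-(n : ℤ)) a := by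
  rw [polyLS, aeval_def, eval₂_eq_sum]
  refine Finset.sum_congr rfl fun n _ => ?_
  dsimp only
  rw [HahnSeries.single_pow, HahnSeries.algebraMap_apply', PowerSeries.algebraMap_eq,
    HahnSeries.ofPowerSeries_C, HahnSeries.C_apply, HahnSeries.single_mul_single]
  simp

lemma coeff_polyLS_neg (P : F[X]) (n : ℕ) : (polyLS P).coeff (-(n : ℤ)) = P.coeff n := by
  rw [polyLS_eq_sum, Polynomial.sum_def, HahnSeries.coeff_sum]
  simp only [HahnSeries.coeff_single, neg_inj, Nat.cast_inj]
  rw [Finset.sum_ite_eq]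
  split_ifs with h
  · rfl
  · exact (notMem_support_iff.mp h).symm

lemma coeff_polyLS_neg_natDegree_ne_zero {P : F[X]} (hP : P ≠ 0) :
    (polyLS P).coeff (-(P.natDegree : ℤ)) ≠ 0 := by
  rwa [coeff_polyLS_neg, ← leadingCoeff, leadingCoeff_ne_zero]

lemma polyLS_ne_zero {P : F[X]} (hP : P ≠ 0) : polyLS P ≠ 0 :=
  HahnSeries.ne_zero_of_coeff_ne_zero (coeff_polyLS_neg_natDegree_ne_zero hP)

lemma order_polyLS {P : F[X]} (hP : P ≠ 0) : (polyLS P).order = -(P.natDegree : ℤ) := by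
  refine le_antisymm (HahnSeries.order_le_of_coeff_ne_zero
    (coeff_polyLS_neg_natDegree_ne_zero hP)) (not_lt.mp fun h => ?_)
  -- the coefficient of `polyLS P` at an index `-n < -natDegree` is `P.coeff n = 0`
  have hj : (polyLS P).order = -(((-(polyLS P).order).toNat : ℕ) : ℤ) := by omega
  refine HahnSeries.coeff_order_eq_zero.not.mpr (polyLS_ne_zero hP) ?_
  rw [hj, coeff_polyLS_neg]
  exact coeff_eq_zero_of_natDegree_lt (by omega)

lemma lAbs_polyLS {P : F[X]} (hP : P ≠ 0) :
    lAbs t (polyLS P) = t ^ P.natDegree := by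
  rw [lAbs_of_ne_zero (polyLS_ne_zero hP), order_polyLS hP, neg_neg, zpow_natCast]

lemma polyLS_mul (P Q : F[X]) : polyLS (P * Q) = polyLS P * polyLS Q := map_mul _ P Q

lemma polyLS_sub (P Q : F[X]) : polyLS (P - Q) = polyLS P - polyLS Q := map_sub _ P Q

lemma one_le_lAbs_polyLS (ht : 1 < t) {P : F[X]} (hP : P ≠ 0) : 1 ≤ lAbs t (polyLS P) := by
  rw [lAbs_polyLS hP]
  exact one_le_pow₀ ht.le

lemma inv_lAbs_polyLS_le_lAbs_div (ht : 1 < t) {P : F[X]} (hP : P ≠ 0) (Q : F[X]) :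
    (lAbs t (polyLS Q))⁻¹ ≤ lAbs t (polyLS P / polyLS Q) := by
  rw [lAbs_div (by linarith), div_eq_mul_inv]
  exact le_mul_of_one_le_left (inv_nonneg.mpr (lAbs_nonneg (by linarith) _))
    (one_le_lAbs_polyLS ht hP)

lemma inv_mul_le_lAbs_div_sub_div (ht : 1 < t) {P Q P' Q' : F[X]} (hQ : Q ≠ 0) (hQ' : Q' ≠ 0)
    (hne : P * Q' ≠ Q * P') :
    (lAbs t (polyLS Q) * lAbs t (polyLS Q'))⁻¹ ≤
      lAbs t (polyLS P / polyLS Q - polyLS P' / polyLS Q') := by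
  rw [div_sub_div _ _ (polyLS_ne_zero hQ) (polyLS_ne_zero hQ'), ← lAbs_mul (by linarith),
    ← polyLS_mul, ← polyLS_mul, ← polyLS_mul, ← polyLS_sub]
  exact inv_lAbs_polyLS_le_lAbs_div ht (sub_ne_zero.mpr hne) _

lemma inv_mul_le_lAbs_sub_div (ht : 1 < t) {f : LaurentSeries F} {P Q P' Q' : F[X]}
    (hQ : Q ≠ 0) (hQ' : Q' ≠ 0) (hne : P * Q' ≠ Q * P')
    (hclose : lAbs t (f - polyLS P / polyLS Q) < (lAbs t (polyLS Q) * lAbs t (polyLS Q'))⁻¹) :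
    (lAbs t (polyLS Q) * lAbs t (polyLS Q'))⁻¹ ≤ lAbs t (f - polyLS P' / polyLS Q') := by
  have hgap := inv_mul_le_lAbs_div_sub_div ht hQ hQ' hne
  rw [← sub_add_sub_cancel f (polyLS P / polyLS Q), lAbs_add_eq_of_lt ht (hclose.trans_le hgap)]
  exact hgap

end PolyLS

section ApproxSet

/-- The solution set inside `irrExp`, so `irrExp t f = sSup {τ | (approxSet t f τ).Infinite}`
holds by `rfl`. -/
def approxSet (t : ℝ) (f : LaurentSeries F) (τ : ℝ) : Set (F[X] × F[X]) :=
  {PQ | PQ.2 ≠ 0 ∧ lAbs t (f - polyLS PQ.1 / polyLS PQ.2) < lAbs t (polyLS PQ.2) ^ (-τ)}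

variable {f : LaurentSeries F} {τ : ℝ}

lemma le_irrExp_and_irrExp_le {a b : ℝ} (hinf : ∀ τ < a, (approxSet t f τ).Infinite)
    (hfin : ∀ τ, b < τ → (approxSet t f τ).Finite) : a ≤ irrExp t f ∧ irrExp t f ≤ b := by
  have hle : ∀ τ ∈ {τ | (approxSet t f τ).Infinite}, τ ≤ b :=
    fun τ hτ => le_of_not_gt fun hbτ => hτ (hfin τ hbτ)
  exact ⟨le_of_forall_lt_imp_le_of_dense fun c hc => le_csSup ⟨b, hle⟩ (hinf c hc),
    csSup_le ⟨a - 1, hinf _ (by linarith)⟩ hle⟩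

lemma fst_eq_of_mem_approxSet (ht : 1 < t) (hτ : 1 ≤ τ) {P₁ P₂ Q : F[X]}
    (h₁ : (P₁, Q) ∈ approxSet t f τ) (h₂ : (P₂, Q) ∈ approxSet t f τ) : P₁ = P₂ := by
  by_contra hne
  have hy : 1 ≤ lAbs t (polyLS Q) := one_le_lAbs_polyLS ht h₁.1
  have hdiff : polyLS P₁ / polyLS Q - polyLS P₂ / polyLS Q =
      (f - polyLS P₂ / polyLS Q) + -(f - polyLS P₁ / polyLS Q) := by ring
  have hclose : lAbs t (polyLS (P₁ - P₂) / polyLS Q) < lAbs t (polyLS Q) ^ (-τ) := by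
    rw [polyLS_sub, sub_div, hdiff]
    refine (lAbs_add_le_max ht _ _).trans_lt ?_
    rw [lAbs_neg]
    exact max_lt h₂.2 h₁.2
  have hτ' : lAbs t (polyLS Q) ^ (-τ) ≤ (lAbs t (polyLS Q))⁻¹ := by
    rw [← Real.rpow_neg_one]
    exact Real.rpow_le_rpow_of_exponent_le hy (neg_le_neg hτ)
  exact (inv_lAbs_polyLS_le_lAbs_div ht (sub_ne_zero.mpr hne) Q).not_gt (hclose.trans_le hτ')

lemma finite_setOf_natDegree_lt [Finite F] (d : ℕ) : {Q : F[X] | Q.natDegree < d}.Finite := by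
  have : Finite (degreeLT F d) := .of_equiv (Fin d → F) (degreeLTEquiv F d).toEquiv.symm
  refine (degreeLT F d : Set F[X]).toFinite.subset fun Q hQ => mem_degreeLT.mpr ?_
  exact degree_le_natDegree.trans_lt (WithBot.coe_lt_coe.mpr hQ)

lemma approxSet_finite [Finite F] (ht : 1 < t) (hτ : 1 ≤ τ)
    (hbdd : BddAbove ((fun PQ : F[X] × F[X] => lAbs t (polyLS PQ.2)) '' approxSet t f τ)) :
    (approxSet t f τ).Finite := by
  obtain ⟨B, hB⟩ := hbdd
  obtain ⟨d, hd⟩ := pow_unbounded_of_one_lt B ht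
  refine Set.Finite.of_finite_image (f := Prod.snd) ((finite_setOf_natDegree_lt d).subset ?_) ?_
  · rintro _ ⟨PQ, hPQ, rfl⟩
    have : lAbs t (polyLS PQ.2) < t ^ d := (hB ⟨PQ, hPQ, rfl⟩).trans_lt hd
    rwa [lAbs_polyLS hPQ.1, pow_lt_pow_iff_right₀ ht] at this
  · rintro ⟨P₁, Q₁⟩ h₁ ⟨P₂, Q₂⟩ h₂ (rfl : Q₁ = Q₂)
    rw [fst_eq_of_mem_approxSet ht hτ h₁ h₂]

end ApproxSet

section RealSequences

open Filter Topology

/-- `k` is the first index `≥ n₁` with `z < x k ^ δ`; unless `k = n₁`, the growth bound at `k - 1`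
gives `x k ≤ c₀ (x (k - 1) ^ δ) ^ (θ / δ) ≤ c₀ z ^ (θ / δ)`. -/
lemma exists_lt_rpow_le_max {x : ℕ → ℝ} {c₀ δ θ : ℝ} {n₁ : ℕ} (hx : Tendsto x atTop atTop)
    (hx0 : ∀ n, 0 ≤ x n) (hstep : ∀ n ≥ n₁, x (n + 1) ≤ c₀ * x n ^ θ) (hc₀ : 0 ≤ c₀)
    (hδ : 0 < δ) (hθ : 0 ≤ θ) (z : ℝ) :
    ∃ k ≥ n₁, z < x k ^ δ ∧ x k ≤ max (x n₁) (c₀ * z ^ (θ / δ)) := by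
  have hex : ∃ m, z < x (m + n₁) ^ δ :=
    (((tendsto_rpow_atTop hδ).comp hx).comp (tendsto_add_atTop_nat n₁)).eventually_gt_atTop z
      |>.exists
  obtain ⟨m, hm, hmin⟩ : ∃ m, z < x (m + n₁) ^ δ ∧ ∀ j < m, ¬z < x (j + n₁) ^ δ :=
    ⟨_, Nat.find_spec hex, fun _ => Nat.find_min hex⟩
  refine ⟨m + n₁, by omega, hm, ?_⟩
  rcases m with _ | j
  · rw [zero_add]
    exact le_max_left _ _
  have hprev : x (j + n₁) ^ δ ≤ z := not_lt.mp (hmin j j.lt_succ_self)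
  calc x (j + 1 + n₁) = x (j + n₁ + 1) := by rw [add_right_comm]
    _ ≤ c₀ * (x (j + n₁) ^ δ) ^ (θ / δ) := by
        rw [← Real.rpow_mul (hx0 _), mul_div_cancel₀ _ hδ.ne']
        exact hstep _ (by omega)
    _ ≤ max (x n₁) (c₀ * z ^ (θ / δ)) := by
        refine le_max_of_le_right (mul_le_mul_of_nonneg_left ?_ hc₀)
        exact Real.rpow_le_rpow (Real.rpow_nonneg (hx0 _) _) hprev (by positivity)

lemma eventually_rpow_lt_and_max_lt {τ ρ θ c c₀ c₁ X : ℝ} (hc : 0 ≤ c) (hc₁ : 0 < c₁)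
    (hθ₀ : 0 ≤ θ) (hρ : 1 + ρ < τ) (hθ : 1 + θ < τ) :
    ∀ᶠ y in atTop, y ^ (1 + ρ - τ) < c₁ ∧ max X (c₀ * (c * y) ^ θ) < y ^ (τ - 1) := by
  have hsmall : Tendsto (fun y : ℝ => y ^ (1 + ρ - τ)) atTop (𝓝 0) := by
    simpa using tendsto_rpow_neg_atTop (by linarith : 0 < τ - (1 + ρ))
  filter_upwards [hsmall.eventually (gt_mem_nhds hc₁), eventually_gt_atTop 0,
    (tendsto_rpow_atTop (by linarith : 0 < τ - 1)).eventually_gt_atTop X,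
    (tendsto_rpow_atTop (by linarith : 0 < τ - 1 - θ)).eventually_gt_atTop (c₀ * c ^ θ)]
    with y h₁ hy hX hC
  refine ⟨h₁, max_lt hX ?_⟩
  calc c₀ * (c * y) ^ θ = c₀ * c ^ θ * y ^ θ := by rw [Real.mul_rpow hc hy.le, mul_assoc]
    _ < y ^ (τ - 1 - θ) * y ^ θ := by gcongr
    _ = y ^ (τ - 1) := by rw [← Real.rpow_add hy, sub_add_cancel]

end RealSequences

section ApproximationSequence

open Filter

variable {f : LaurentSeries F} {τ δ ρ c₁ c₂ : ℝ}

lemma tendsto_lAbs_polyLS_atTop (ht : 1 < t) {Q : ℕ → F[X]} (hQ : ∀ n ≥ 1, Q n ≠ 0)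
    (hlt : ∀ n ≥ 1, lAbs t (polyLS (Q n)) < lAbs t (polyLS (Q (n + 1)))) :
    Tendsto (fun n => lAbs t (polyLS (Q n))) atTop atTop := by
  have hdeg : StrictMono fun n => (Q (n + 1)).natDegree := strictMono_nat_of_lt_succ fun n => by
    have := hlt (n + 1) (by omega)
    rwa [lAbs_polyLS (hQ _ (by omega)), lAbs_polyLS (hQ _ (by omega)),
      pow_lt_pow_iff_right₀ ht] at this
  rw [← tendsto_add_atTop_iff_nat 1]
  refine ((tendsto_pow_atTop_atTop_of_one_lt ht).comp hdeg.tendsto_atTop).congr fun n => ?_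
  exact (lAbs_polyLS (hQ _ (by omega))).symm

lemma approxSet_infinite {P Q : ℕ → F[X]} (hQ : ∀ n ≥ 1, Q n ≠ 0)
    (hx : Tendsto (fun n => lAbs t (polyLS (Q n))) atTop atTop)
    (hupper : ∀ n ≥ 1, lAbs t (f - polyLS (P n) / polyLS (Q n)) ≤
      c₂ / lAbs t (polyLS (Q n)) ^ (1 + δ))
    (hτ : τ < 1 + δ) : (approxSet t f τ).Infinite := by
  have hmem : ∀ᶠ n in atTop, (P n, Q n) ∈ approxSet t f τ := by
    filter_upwards [eventually_ge_atTop 1, hx.eventually_gt_atTop 0,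
      ((tendsto_rpow_atTop (by linarith : 0 < 1 + δ - τ)).comp hx).eventually_gt_atTop c₂]
      with n hn hx0 hc₂
    refine ⟨hQ n hn, (hupper n hn).trans_lt ?_⟩
    rwa [div_lt_iff₀ (by positivity), ← Real.rpow_add hx0, neg_add_eq_sub]
  refine .of_image (fun PQ => lAbs t (polyLS PQ.2)) (Set.infinite_of_not_bddAbove ?_)
  rintro ⟨B, hB⟩
  obtain ⟨n, hn, hBn⟩ := (hmem.and (hx.eventually_gt_atTop B)).exists
  exact hBn.not_ge (hB ⟨_, hn, rfl⟩)

/-- Either `P/Q = P'/Q'`, and then `|Q| ≤ |Q'|` by coprimality and the lower bound at `Q` applies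
to `P'/Q'`; or `|f - P/Q| < 1 / (|Q| |Q'|)` by `hgap`, and then `|f - P'/Q'| ≥ 1 / (|Q| |Q'|)`. -/
lemma lt_rpow_or_rpow_lt_of_mem_approxSet (ht : 1 < t) {P Q P' Q' : F[X]} (hQ : Q ≠ 0)
    (hcop : IsCoprime P Q) (hc₁ : 0 ≤ c₁) (hρ : 0 ≤ 1 + ρ)
    (hlower : c₁ / lAbs t (polyLS Q) ^ (1 + ρ) ≤ lAbs t (f - polyLS P / polyLS Q))
    (hupper : lAbs t (f - polyLS P / polyLS Q) ≤ c₂ / lAbs t (polyLS Q) ^ (1 + δ))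
    (hgap : c₂ * lAbs t (polyLS Q') < lAbs t (polyLS Q) ^ δ)
    (hmem : (P', Q') ∈ approxSet t f τ) :
    c₁ < lAbs t (polyLS Q') ^ (1 + ρ - τ) ∨ lAbs t (polyLS Q') ^ (τ - 1) < lAbs t (polyLS Q) := by
  obtain ⟨hQ', hsol⟩ := hmem
  set x := lAbs t (polyLS Q)
  set y := lAbs t (polyLS Q')
  have hx : 0 < x := one_pos.trans_le (one_le_lAbs_polyLS ht hQ)
  have hy : 0 < y := one_pos.trans_le (one_le_lAbs_polyLS ht hQ')
  by_cases hPQ : P * Q' = Q * P'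
  · left
    have hxy : x ≤ y := by
      simp only [x, y, lAbs_polyLS hQ, lAbs_polyLS hQ']
      exact pow_le_pow_right₀ ht.le (natDegree_le_of_dvd (hcop.symm.dvd_of_dvd_mul_left
        ⟨P', hPQ⟩) hQ')
    have hsame : polyLS P / polyLS Q = polyLS P' / polyLS Q' := by
      rw [div_eq_div_iff (polyLS_ne_zero hQ) (polyLS_ne_zero hQ'), ← polyLS_mul, ← polyLS_mul,
        hPQ, mul_comm]
    have : c₁ / y ^ (1 + ρ) < y ^ (-τ) := calc
      c₁ / y ^ (1 + ρ) ≤ c₁ / x ^ (1 + ρ) := by gcongr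
      _ ≤ lAbs t (f - polyLS P' / polyLS Q') := hsame ▸ hlower
      _ < y ^ (-τ) := hsol
    rwa [div_lt_iff₀ (by positivity), ← Real.rpow_add hy, neg_add_eq_sub] at this
  · right
    have hclose : lAbs t (f - polyLS P / polyLS Q) < (x * y)⁻¹ := by
      refine hupper.trans_lt ?_
      rw [Real.rpow_add hx, Real.rpow_one, div_lt_iff₀ (by positivity), ← div_eq_inv_mul,
        lt_div_iff₀ (by positivity)]
      calc c₂ * (x * y) = x * (c₂ * y) := by ring
        _ < x * x ^ δ := by gcongr
    have : (x * y)⁻¹ < (y ^ τ)⁻¹ := by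
      rw [← Real.rpow_neg hy.le]
      exact (inv_mul_le_lAbs_sub_div ht hQ hQ' hPQ hclose).trans_lt hsol
    rw [inv_lt_inv₀ (by positivity) (by positivity)] at this
    rwa [Real.rpow_sub_one hy.ne', div_lt_iff₀ hy]

lemma bddAbove_lAbs_denom_approxSet (ht : 1 < t) {θ c₀ : ℝ} {P Q : ℕ → F[X]}
    (hQ : ∀ n ≥ 1, Q n ≠ 0) (hx : Tendsto (fun n => lAbs t (polyLS (Q n))) atTop atTop)
    (hstep : ∀ n ≥ 1, lAbs t (polyLS (Q (n + 1))) ≤ c₀ * lAbs t (polyLS (Q n)) ^ θ)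
    (happrox : ∀ n ≥ 1,
      c₁ / lAbs t (polyLS (Q n)) ^ (1 + ρ) ≤ lAbs t (f - polyLS (P n) / polyLS (Q n)) ∧
      lAbs t (f - polyLS (P n) / polyLS (Q n)) ≤ c₂ / lAbs t (polyLS (Q n)) ^ (1 + δ))
    (hcop : ∃ N, ∀ n ≥ N, IsCoprime (P n) (Q n))
    (hδ : 0 < δ) (hρ : 0 ≤ 1 + ρ) (hθ : 0 ≤ θ) (hc₀ : 0 ≤ c₀) (hc₁ : 0 < c₁) (hc₂ : 0 ≤ c₂)
    (hτ : max (1 + ρ) (1 + θ / δ) < τ) :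
    BddAbove ((fun PQ : F[X] × F[X] => lAbs t (polyLS PQ.2)) '' approxSet t f τ) := by
  obtain ⟨N, hN⟩ := hcop
  obtain ⟨hτρ, hτθ⟩ := max_lt_iff.mp hτ
  obtain ⟨B, hB⟩ := eventually_atTop.mp <| eventually_rpow_lt_and_max_lt
    (X := lAbs t (polyLS (Q (max N 1)))) (c₀ := c₀) hc₂ hc₁ (by positivity) hτρ hτθ
  refine ⟨B, Set.forall_mem_image.mpr fun ⟨P', Q'⟩ hmem => le_of_not_gt fun hBy => ?_⟩
  obtain ⟨hsmall, hlarge⟩ := hB _ hBy.le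
  obtain ⟨k, hk, hgap, hxk⟩ := exists_lt_rpow_le_max hx (fun n => lAbs_nonneg (by linarith) _)
    (fun n hn => hstep n (le_of_max_le_right hn)) hc₀ hδ hθ (c₂ * lAbs t (polyLS Q'))
  have hk1 : 1 ≤ k := le_of_max_le_right hk
  rcases lt_rpow_or_rpow_lt_of_mem_approxSet ht (hQ k hk1) (hN k (le_of_max_le_left hk))
    hc₁.le hρ (happrox k hk1).1 (happrox k hk1).2 hgap hmem with h | h
  · exact hsmall.not_gt h
  · exact lt_asymm (h.trans_le hxk) hlarge

end ApproximationSequence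

end

theorem approximation_lemma_coprime_general
    (F : Type*) [Field F] [Fintype F]
    (t : ℝ) (ht : 1 < t)
    (f : LaurentSeries F) (δ ρ θ : ℝ) (hδ : 0 < δ) (hδρ : δ ≤ ρ) (hθ : 1 ≤ θ)
    (c₀ c₁ c₂ : ℝ) (hc₀ : 0 < c₀) (hc₁ : 0 < c₁) (hc₂ : 0 < c₂)
    (P Q : ℕ → Polynomial F) (hQ : ∀ n ≥ 1, Q n ≠ 0)
    (hgrow : ∀ n ≥ 1, lAbs t (polyLS (Q n)) < lAbs t (polyLS (Q (n + 1))) ∧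
      lAbs t (polyLS (Q (n + 1))) ≤ c₀ * lAbs t (polyLS (Q n)) ^ θ)
    (happrox : ∀ n ≥ 1,
      c₁ / lAbs t (polyLS (Q n)) ^ (1 + ρ) ≤ lAbs t (f - polyLS (P n) / polyLS (Q n)) ∧
      lAbs t (f - polyLS (P n) / polyLS (Q n)) ≤ c₂ / lAbs t (polyLS (Q n)) ^ (1 + δ))
    (hcop : ∃ N : ℕ, ∀ n ≥ N, IsCoprime (P n) (Q n)) :
    (1 + δ ≤ irrExp t f ∧ irrExp t f ≤ max (1 + ρ) (1 + θ / δ)) ∧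
      (ρ = δ → θ ≤ δ ^ 2 → irrExp t f = 1 + δ) := by
  have hx := tendsto_lAbs_polyLS_atTop ht hQ fun n hn => (hgrow n hn).1
  have hθδ : 0 ≤ θ / δ := by positivity
  have hbounds := le_irrExp_and_irrExp_le
    (fun τ hτ => approxSet_infinite hQ hx (fun n hn => (happrox n hn).2) hτ)
    fun τ hτ => approxSet_finite ht (by linarith [le_max_right (1 + ρ) (1 + θ / δ)]) <|
      bddAbove_lAbs_denom_approxSet ht hQ hx (fun n hn => (hgrow n hn).2) happrox hcop hδ
        (by linarith) (by linarith) hc₀.le hc₁ hc₂.le hτ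
  refine ⟨hbounds, fun hρδ hθ_le => le_antisymm (hbounds.2.trans ?_) hbounds.1⟩
  have : θ / δ ≤ δ := by rw [div_le_iff₀ hδ]; nlinarith
  rw [hρδ, max_le_iff]
  constructor <;> linarith

/-- The approximation lemma with the coprimality assumption: if moreover
`gcd(P_n, Q_n) = 1` for all large `n`, then `1 + δ ≤ μ(f) ≤ max(1 + ρ, 1 + θ/δ)`;
in particular if `ρ = δ` and `θ ≤ δ²` then `μ(f) = 1 + δ`. -/
theorem approximation_lemma_coprime
    (p e q : ℕ) (hp : p.Prime) (he : 1 ≤ e) (hq : q = p ^ e)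
    (F : Type*) [Field F] [Fintype F] (hcard : Fintype.card F = q)
    (t : ℝ) (ht : 1 < t)
    (f : LaurentSeries F) (δ ρ θ : ℝ) (hδ : 0 < δ) (hδρ : δ ≤ ρ) (hθ : 1 ≤ θ)
    (c₀ c₁ c₂ : ℝ) (hc₀ : 0 < c₀) (hc₁ : 0 < c₁) (hc₂ : 0 < c₂)
    (P Q : ℕ → Polynomial F) (hQ : ∀ n ≥ 1, Q n ≠ 0)
    (hgrow : ∀ n ≥ 1, lAbs t (polyLS (Q n)) < lAbs t (polyLS (Q (n + 1))) ∧
      lAbs t (polyLS (Q (n + 1))) ≤ c₀ * lAbs t (polyLS (Q n)) ^ θ)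
    (happrox : ∀ n ≥ 1,
      c₁ / lAbs t (polyLS (Q n)) ^ (1 + ρ) ≤ lAbs t (f - polyLS (P n) / polyLS (Q n)) ∧
      lAbs t (f - polyLS (P n) / polyLS (Q n)) ≤ c₂ / lAbs t (polyLS (Q n)) ^ (1 + δ))
    (hcop : ∃ N : ℕ, ∀ n ≥ N, IsCoprime (P n) (Q n)) :
    (1 + δ ≤ irrExp t f ∧ irrExp t f ≤ max (1 + ρ) (1 + θ / δ)) ∧
      (ρ = δ → θ ≤ δ ^ 2 → irrExp t f = 1 + δ) :=
  approximation_lemma_coprime_general F t ht f δ ρ θ hδ hδρ hθ c₀ c₁ c₂ hc₀ hc₁ hc₂ P Q hQ hgrow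
    happrox hcop
end
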